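/- An ideal Q of a commutative semiring R is k-semiprime if and only if Q is a k-ideal and a semiprime ideal of R, i.e., Q is a proper k-ideal such that for every ideal I of R (not necessarily a k-ideal), I² ⊆ Q implies I ⊆ Q. -/

import Mathlib

/-!
Every ideal `I` lies in its k-closure `{x | ∃ a ∈ I, x + a ∈ I}`, the smallest k-ideal containing
it, and for a k-ideal `Q` the inclusion `I * J ≤ Q` survives replacing a factor by its k-closure.
So `I * I ≤ Q` gives `kClosure I * kClosure I ≤ Q`, and k-semiprimality of `Q`, applied to the
k-ideal `kClosure I`, yields `I ≤ Q`.
-/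

variable {R : Type*} [CommSemiring R]

/-- An ideal `I` of a commutative semiring is a *k-ideal* (subtractive ideal) if
`a ∈ I` and `a + b ∈ I` imply `b ∈ I`. -/
def IsKIdeal (I : Ideal R) : Prop :=
  ∀ a b : R, a ∈ I → a + b ∈ I → b ∈ I

/-- A *k-semiprime* ideal: a proper k-ideal `Q` such that for every k-ideal `I`,
`I * I ≤ Q` implies `I ≤ Q`. -/
def IsKSemiprime (Q : Ideal R) : Prop :=
  IsKIdeal Q ∧ Q ≠ ⊤ ∧ ∀ I : Ideal R, IsKIdeal I → I * I ≤ Q → I ≤ Q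

def kClosure (I : Ideal R) : Ideal R where
  carrier := {x | ∃ a ∈ I, x + a ∈ I}
  zero_mem' := ⟨0, I.zero_mem, by simp⟩
  add_mem' := by
    rintro x y ⟨a, ha, hxa⟩ ⟨b, hb, hyb⟩
    refine ⟨a + b, I.add_mem ha hb, ?_⟩
    convert I.add_mem hxa hyb using 1
    ring
  smul_mem' := by
    rintro r x ⟨a, ha, hxa⟩
    refine ⟨r * a, I.mul_mem_left r ha, ?_⟩
    simpa [mul_add] using I.mul_mem_left r hxa

section kClosure

variable {I J Q : Ideal R}

theorem le_kClosure (I : Ideal R) : I ≤ kClosure I :=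
  fun x hx => ⟨0, I.zero_mem, by simpa using hx⟩

theorem isKIdeal_kClosure (I : Ideal R) : IsKIdeal (kClosure I) := by
  rintro x y ⟨a, ha, hxa⟩ ⟨c, hc, hxyc⟩
  refine ⟨x + a + c, I.add_mem hxa hc, ?_⟩
  convert I.add_mem hxyc ha using 1
  ring

theorem IsKIdeal.kClosure_le (hJ : IsKIdeal J) (hIJ : I ≤ J) : kClosure I ≤ J := by
  rintro x ⟨a, ha, hxa⟩
  exact hJ a x (hIJ ha) (by simpa [add_comm] using hIJ hxa)

theorem kClosure_mul_le : kClosure I * J ≤ kClosure (I * J) := by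
  refine Ideal.mul_le.mpr fun x ⟨a, ha, hxa⟩ y hy => ⟨a * y, Ideal.mul_mem_mul ha hy, ?_⟩
  simpa [add_mul] using Ideal.mul_mem_mul hxa hy

theorem IsKIdeal.kClosure_mul_le (hQ : IsKIdeal Q) (h : I * J ≤ Q) : kClosure I * J ≤ Q :=
  _root_.kClosure_mul_le.trans (hQ.kClosure_le h)

theorem IsKIdeal.kClosure_mul_kClosure_le (hQ : IsKIdeal Q) (h : I * J ≤ Q) :
    kClosure I * kClosure J ≤ Q := by
  have hJI : kClosure J * I ≤ Q := hQ.kClosure_mul_le (mul_comm I J ▸ h)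
  exact hQ.kClosure_mul_le (mul_comm (kClosure J) I ▸ hJI)

end kClosure

/-- An ideal `Q` is k-semiprime if and only if it is a k-ideal and a semiprime ideal,
i.e. a proper ideal such that `I² ⊆ Q` implies `I ⊆ Q` for every ideal `I`. -/
theorem isKSemiprime_iff (Q : Ideal R) :
    IsKSemiprime Q ↔
      IsKIdeal Q ∧ Q ≠ ⊤ ∧ ∀ I : Ideal R, I * I ≤ Q → I ≤ Q := by
  refine ⟨fun ⟨hk, hne, hsp⟩ => ⟨hk, hne, fun I hII => ?_⟩,
    fun ⟨hk, hne, hsp⟩ => ⟨hk, hne, fun I _ => hsp I⟩⟩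
  have hclosure : kClosure I * kClosure I ≤ Q := hk.kClosure_mul_kClosure_le hII
  exact (le_kClosure I).trans (hsp _ (isKIdeal_kClosure I) hclosure)
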